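/- The products ρ_n = a_n b_n satisfy the four-term recurrence n^2(n-1)(2n-3)ρ_n = (n-1)(2n-1)(3n^2-5n+1)ρ_{n-1} - (n-2)(2n-3)(3n^2-5n+1)ρ_{n-2} + (n-2)(n-3)^2(2n-1)ρ_{n-3} for all n ≥ 3. -/

import Mathlib

/-!
If `F = ∑ cₙ xⁿ` on `(-1, 1)`, the coefficients of `(1 - x)² F' - F` are
`(n + 1) cₙ₊₁ - (2n + 1) cₙ + (n - 1) cₙ₋₁`. The generating function of `a` satisfies
`(1 - x)² F' = F`, and since `(eʸ E₁(y))' = eʸ E₁(y) - 1/y`, the one of `b` satisfies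
`(1 - x)² G' = G - (1 - x)`. Comparing coefficients, both sequences satisfy
`n xₙ - (2n - 1) xₙ₋₁ + (n - 2) xₙ₋₂ = 0` for `n ≥ 3`, and `a` also for `n = 2`. Multiplying
these recurrences at `n` and `n - 1` and eliminating gives the four-term recurrence for the
products; at `n = 3` the failure of the recurrence of `b` at `n = 2` is multiplied by `n - 3`.
-/

open Set Filter MeasureTheory FormalMultilinearSeries

/-- The exponential integral `E₁(x) = ∫_x^∞ e^{-t}/t dt`. -/
noncomputable def E1 (x : ℝ) : ℝ := ∫ t in Set.Ioi x, Real.exp (-t) / t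

theorem continuousOn_exp_neg_div : ContinuousOn (fun t : ℝ => Real.exp (-t) / t) (Ioi 0) := by
  fun_prop (disch := intro t ht; exact ne_of_gt ht)

theorem integrableOn_exp_neg_div_Ioi {c : ℝ} (hc : 0 < c) :
    IntegrableOn (fun t => Real.exp (-t) / t) (Ioi c) := by
  refine ((exp_neg_integrableOn_Ioi c one_pos).const_mul c⁻¹).mono'
    ((continuousOn_exp_neg_div.mono fun t ht => hc.trans ht).aestronglyMeasurable
      measurableSet_Ioi) ?_
  filter_upwards [ae_restrict_mem measurableSet_Ioi] with t (ht : c < t)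
  rw [Real.norm_of_nonneg (by positivity [hc.trans ht]), neg_one_mul, div_eq_inv_mul]
  gcongr

theorem hasDerivAt_E1 {x : ℝ} (hx : 0 < x) : HasDerivAt E1 (-(Real.exp (-x) / x)) x := by
  have hc : 0 < x / 2 := half_pos hx
  have hcx : x / 2 < x := half_lt_self hx
  have hE1 : (fun t => E1 (x / 2) - ∫ u in x / 2..t, Real.exp (-u) / u) =ᶠ[nhds x] E1 := by
    filter_upwards [lt_mem_nhds hcx] with t ht
    rw [E1, E1, ← intervalIntegral.integral_Ioi_sub_Ioi (integrableOn_exp_neg_div_Ioi hc) ht.le]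
    ring
  have hcont : ContinuousOn (fun t : ℝ => Real.exp (-t) / t) (Ioi (x / 2)) :=
    continuousOn_exp_neg_div.mono fun t ht => hc.trans ht
  have hFTC := intervalIntegral.integral_hasDerivAt_right
    (continuousOn_exp_neg_div.mono (by
      rw [uIcc_of_le hcx.le]; exact fun u hu => hc.trans_le hu.1)).intervalIntegrable
    (hcont.stronglyMeasurableAtFilter isOpen_Ioi x hcx)
    (continuousOn_exp_neg_div.continuousAt (Ioi_mem_nhds hx))
  exact ((hasDerivAt_const x _).sub hFTC).congr_of_eventuallyEq hE1.symm |>.congr_deriv (by simp)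

theorem hasDerivAt_exp_mul_E1 {y : ℝ} (hy : 0 < y) :
    HasDerivAt (fun y => Real.exp y * E1 y) (Real.exp y * E1 y - 1 / y) y :=
  ((Real.hasDerivAt_exp y).mul (hasDerivAt_E1 hy)).congr_deriv (by
    rw [Real.exp_neg]; field_simp; ring)

theorem ode_exp_div_one_sub {x : ℝ} (hx : x < 1) :
    (1 - x) ^ 2 * deriv (fun x => Real.exp (x / (1 - x))) x - Real.exp (x / (1 - x)) = 0 := by
  have h1 : 1 - x ≠ 0 := sub_ne_zero.mpr hx.ne'
  rw [((hasDerivAt_id' x).fun_div ((hasDerivAt_id' x).const_sub 1) h1).exp.deriv]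
  field_simp
  ring

theorem ode_exp_mul_E1 {x : ℝ} (hx : x < 1) :
    (1 - x) ^ 2 * deriv (fun x => Real.exp (1 / (1 - x)) * E1 (1 / (1 - x))) x
      - Real.exp (1 / (1 - x)) * E1 (1 / (1 - x)) = -1 + x := by
  have h1 : 0 < 1 - x := sub_pos.mpr hx
  have h := (hasDerivAt_exp_mul_E1 (one_div_pos.mpr h1)).comp x
    ((hasDerivAt_const x (1 : ℝ)).fun_div ((hasDerivAt_id' x).const_sub 1) h1.ne')
  rw [show (fun x => Real.exp (1 / (1 - x)) * E1 (1 / (1 - x))) =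
    (fun y => Real.exp y * E1 y) ∘ (fun x => 1 / (1 - x)) from rfl, h.deriv]
  field_simp
  ring

theorem enorm_lt_one_iff_abs {y : ℝ} : ‖y‖ₑ < 1 ↔ |y| < 1 := by
  rw [Real.enorm_eq_ofReal_abs, ENNReal.ofReal_lt_one]

section PowerSeries

variable {c c' : ℕ → ℝ} {F : ℝ → ℝ}

theorem hasFPowerSeriesOnBall_ofScalars_of_hasSum
    (hF : ∀ x : ℝ, |x| < 1 → HasSum (fun n => c n * x ^ n) (F x)) :
    HasFPowerSeriesOnBall F (ofScalars ℝ c) 0 1 where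
  r_le := by
    refine ENNReal.le_of_forall_nnreal_lt fun r hr =>
      (ofScalars ℝ c).le_radius_of_tendsto (l := 0) ?_
    have hr1 : |(r : ℝ)| < 1 := by rw [NNReal.abs_eq]; exact_mod_cast hr
    simpa [ofScalars_norm, abs_mul, abs_pow, NNReal.abs_eq] using
      (hF r hr1).summable.tendsto_atTop_zero.norm
  r_pos := one_pos
  hasSum {y} hy := by
    simp only [ofScalars_apply_eq, smul_eq_mul, zero_add]
    exact hF y (enorm_lt_one_iff_abs.mp (by simpa using hy))

theorem eq_of_hasSum_pow
    (hF : ∀ x : ℝ, |x| < 1 → HasSum (fun n => c n * x ^ n) (F x))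
    (hF' : ∀ x : ℝ, |x| < 1 → HasSum (fun n => c' n * x ^ n) (F x)) : c = c' :=
  (ofScalars_series_eq_iff ℝ c c').mp <|
    (hasFPowerSeriesOnBall_ofScalars_of_hasSum hF).hasFPowerSeriesAt.eq_formalMultilinearSeries
      (hasFPowerSeriesOnBall_ofScalars_of_hasSum hF').hasFPowerSeriesAt

theorem hasSum_deriv_of_hasSum
    (hF : ∀ x : ℝ, |x| < 1 → HasSum (fun n => c n * x ^ n) (F x)) {x : ℝ} (hx : |x| < 1) :
    HasSum (fun n : ℕ => (n + 1 : ℝ) * c (n + 1) * x ^ n) (deriv F x) := by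
  have h := (ContinuousLinearMap.apply ℝ ℝ (1 : ℝ)).comp_hasFPowerSeriesOnBall
    (hasFPowerSeriesOnBall_ofScalars_of_hasSum hF).fderiv
  simpa [ofScalars_apply_eq, mul_comm] using
    h.hasSum (y := x) (by simpa using enorm_lt_one_iff_abs.mpr hx)

theorem HasSum.mul_left_of_coeff_shift {d e : ℕ → ℝ} {x s : ℝ}
    (h : HasSum (fun n => d n * x ^ n) s)
    (he₀ : e 0 = 0) (he : ∀ n, e (n + 1) = d n) : HasSum (fun n => e n * x ^ n) (x * s) := by
  refine (hasSum_nat_add_iff' 1).mp ?_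
  simpa [he, he₀, pow_succ, mul_left_comm, mul_comm] using h.mul_left x

noncomputable def odeDefect (c : ℕ → ℝ) : ℕ → ℝ
  | 0 => c 1 - c 0
  | n + 1 => (n + 2) * c (n + 2) - (2 * n + 3) * c (n + 1) + n * c n

theorem odeDefect_succ (c : ℕ → ℝ) (n : ℕ) :
    odeDefect c (n + 1) = (n + 2) * c (n + 2) - (2 * n + 3) * c (n + 1) + n * c n :=
  rfl

theorem hasSum_odeDefect
    (hF : ∀ x : ℝ, |x| < 1 → HasSum (fun n => c n * x ^ n) (F x)) {x : ℝ} (hx : |x| < 1) :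
    HasSum (fun n => odeDefect c n * x ^ n) ((1 - x) ^ 2 * deriv F x - F x) := by
  have hF' := hasSum_deriv_of_hasSum hF hx
  have hxF' : HasSum (fun n : ℕ => n * c n * x ^ n) (x * deriv F x) :=
    hF'.mul_left_of_coeff_shift (by simp) (by simp)
  have hx2F' :
      HasSum (fun n : ℕ => ((n - 1 : ℕ) : ℝ) * c (n - 1) * x ^ n) (x * (x * deriv F x)) :=
    hxF'.mul_left_of_coeff_shift (by simp) (by simp)
  rw [show (1 - x) ^ 2 * deriv F x - F x =
    deriv F x - 2 * (x * deriv F x) + x * (x * deriv F x) - F x by ring]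
  refine (((hF'.sub (hxF'.mul_left 2)).add hx2F').sub (hF x hx)).congr_fun fun n => ?_
  cases n with
  | zero => simp [odeDefect]
  | succ n =>
    simp only [odeDefect, Nat.cast_add, Nat.cast_one, add_tsub_cancel_right]
    ring

end PowerSeries

theorem coeff_eq_of_hasSum_affine {d : ℕ → ℝ} {p q : ℝ}
    (h : ∀ x : ℝ, |x| < 1 → HasSum (fun n => d n * x ^ n) (p + q * x)) :
    d 1 = q ∧ ∀ n, d (n + 2) = 0 := by
  have hpq : ∀ x : ℝ, |x| < 1 → HasSum
      (fun n => (if n = 0 then p else if n = 1 then q else 0) * x ^ n) (p + q * x) := by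
    intro x _
    convert hasSum_sum_of_ne_finset_zero (s := Finset.range 2)
      (L := SummationFilter.unconditional ℕ) ?_ using 1
    · simp [Finset.sum_range_succ]
    · intro n hn
      simp only [Finset.mem_range, not_lt] at hn
      simp [show n ≠ 0 by omega, show n ≠ 1 by omega]
  have hd := eq_of_hasSum_pow h hpq
  exact ⟨by simp [hd], fun n => by simp [hd]⟩

theorem odeDefect_succ_eq_zero_of_hasSum_exp {a : ℕ → ℝ}
    (ha : ∀ x : ℝ, |x| < 1 → HasSum (fun n => a n * x ^ n) (Real.exp (x / (1 - x)))) (k : ℕ) :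
    odeDefect a (k + 1) = 0 := by
  have hA := coeff_eq_of_hasSum_affine (p := 0) (q := 0) fun x hx => by
    rw [zero_mul, add_zero, ← ode_exp_div_one_sub (abs_lt.mp hx).2]
    exact hasSum_odeDefect ha hx
  cases k
  exacts [hA.1, hA.2 _]

theorem odeDefect_add_two_eq_zero_of_hasSum_exp_mul_E1 {b : ℕ → ℝ}
    (hb : ∀ x : ℝ, |x| < 1 → HasSum (fun n => b n * x ^ n)
      (Real.exp (1 / (1 - x)) * E1 (1 / (1 - x)))) (k : ℕ) :
    odeDefect b (k + 2) = 0 :=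
  (coeff_eq_of_hasSum_affine (p := -1) (q := 1) fun x hx => by
    rw [one_mul, ← ode_exp_mul_E1 (abs_lt.mp hx).2]
    exact hasSum_odeDefect hb hx).2 k

theorem four_term_recurrence_mul {R : Type*} [CommRing R] {n x₀ x₁ x₂ x₃ y₀ y₁ y₂ y₃ : R}
    (hx₃ : n * x₃ - (2 * n - 1) * x₂ + (n - 2) * x₁ = 0)
    (hx₂ : (n - 1) * x₂ - (2 * n - 3) * x₁ + (n - 3) * x₀ = 0)
    (hy₃ : n * y₃ - (2 * n - 1) * y₂ + (n - 2) * y₁ = 0)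
    (hy₂ : (n - 3) * ((n - 1) * y₂ - (2 * n - 3) * y₁ + (n - 3) * y₀) = 0) :
    n ^ 2 * (n - 1) * (2 * n - 3) * (x₃ * y₃) =
      (n - 1) * (2 * n - 1) * (3 * n ^ 2 - 5 * n + 1) * (x₂ * y₂) -
      (n - 2) * (2 * n - 3) * (3 * n ^ 2 - 5 * n + 1) * (x₁ * y₁) +
      (n - 2) * (n - 3) ^ 2 * (2 * n - 1) * (x₀ * y₀) := by
  linear_combination
    (n - 1) * (2 * n - 3) * (n * y₃ * hx₃ + ((2 * n - 1) * x₂ - (n - 2) * x₁) * hy₃)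
    + (2 * n - 1) * (n - 2) * ((n - 1) * y₂ - (2 * n - 3) * y₁) * hx₂
    - (2 * n - 1) * (n - 2) * x₀ * hy₂

/-- The products `ρₙ = aₙ bₙ` satisfy the four-term recurrence
`n²(n-1)(2n-3)ρₙ = (n-1)(2n-1)(3n²-5n+1)ρₙ₋₁ - (n-2)(2n-3)(3n²-5n+1)ρₙ₋₂
 + (n-2)(n-3)²(2n-1)ρₙ₋₃` for all `n ≥ 3`. -/
theorem stmt_15 (a b : ℕ → ℝ)
    (ha : ∀ x : ℝ, |x| < 1 → HasSum (fun n => a n * x ^ n) (Real.exp (x / (1 - x))))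
    (hb : ∀ x : ℝ, |x| < 1 → HasSum (fun n => b n * x ^ n)
      (Real.exp (1 / (1 - x)) * E1 (1 / (1 - x)))) :
    ∀ n : ℕ, 3 ≤ n →
      (n : ℝ) ^ 2 * ((n : ℝ) - 1) * (2 * n - 3) * (a n * b n) =
        ((n : ℝ) - 1) * (2 * n - 1) * (3 * (n : ℝ) ^ 2 - 5 * n + 1) * (a (n - 1) * b (n - 1)) -
        ((n : ℝ) - 2) * (2 * n - 3) * (3 * (n : ℝ) ^ 2 - 5 * n + 1) * (a (n - 2) * b (n - 2)) +
        ((n : ℝ) - 2) * ((n : ℝ) - 3) ^ 2 * (2 * n - 1) * (a (n - 3) * b (n - 3)) := by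
  intro n hn
  obtain ⟨k, rfl⟩ := Nat.exists_eq_add_of_le' hn
  have ha₃ := odeDefect_succ_eq_zero_of_hasSum_exp ha (k + 1)
  have ha₂ := odeDefect_succ_eq_zero_of_hasSum_exp ha k
  have hb₃ : odeDefect b (k + 1 + 1) = 0 := odeDefect_add_two_eq_zero_of_hasSum_exp_mul_E1 hb k
  have hb₂ : (k : ℝ) * odeDefect b (k + 1) = 0 := by
    rcases k with _ | k
    · simp
    · exact mul_eq_zero_of_right _ (odeDefect_add_two_eq_zero_of_hasSum_exp_mul_E1 hb k)
  simp only [odeDefect_succ] at ha₃ ha₂ hb₃ hb₂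
  push_cast at ha₃ ha₂ hb₃ hb₂
  have := four_term_recurrence_mul (n := (k : ℝ) + 3)
    (x₃ := a (k + 3)) (x₂ := a (k + 2)) (x₁ := a (k + 1)) (x₀ := a k)
    (y₃ := b (k + 3)) (y₂ := b (k + 2)) (y₁ := b (k + 1)) (y₀ := b k)
    (by linear_combination ha₃) (by linear_combination ha₂)
    (by linear_combination hb₃) (by linear_combination hb₂)
  simp only [show k + 3 - 1 = k + 2 by omega, show k + 3 - 2 = k + 1 by omega, Nat.add_sub_cancel]
  push_cast
  linear_combination this
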